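/- arXiv:math/9802086 — 2 statements merged into one kernel-verified Lean document; each statement's English description precedes it below -/
import Mathlib

section
/- Fix a real number q with 0 < q < 1 and let a, b, c, d be the bounded operators on ℓ²(ℕ) defined on the standard orthonormal basis by a e_0 = 0, a e_j = √(1 − q^{2j}) e_{j−1} (j ≥ 1), b e_j = −q^{j+1} e_j, c e_j = q^j e_j, d e_j = √(1 − q^{2(j+1)}) e_{j+1}. Then the only closed linear subspaces of ℓ²(ℕ) that are invariant under each of the operators a, b, c, d are {0} and ℓ²(ℕ); that is, the representation π_q of ℂ_q[SU(2)] is topologically irreducible. -/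
/-- The Hilbert space `ℓ²(ℕ)` of square-summable complex sequences. -/
abbrev L2N : Type := lp (fun _ : ℕ => ℂ) 2

/-- The standard orthonormal basis vectors `e_j` of `ℓ²(ℕ)`. -/
noncomputable def eN (j : ℕ) : L2N := lp.single 2 j 1

/-!
The operator `c` is diagonal with the strictly decreasing eigenvalues `q ^ j`, so for `v ∈ V` with
leading nonzero coordinate `v_j` the rescaled powers `q ^ (-j n) • c ^ n v` converge to `v_j e_j`
at rate `q ^ n`; hence a nonzero closed `c`-invariant subspace contains some basis vector `e_j`.
The weighted shifts `a` and `d` have nonzero weights, so from `e_j` they reach every `e_k`, and the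
closed span of the `e_k` is all of `ℓ²(ℕ)`.
-/

open Filter Topology ENNReal

namespace lp

variable {𝕜 ι : Type*} [RCLike 𝕜] [DecidableEq ι] {p : ℝ≥0∞} [Fact (1 ≤ p)]

def IsDiagonal (T : lp (fun _ : ι => 𝕜) p →L[𝕜] lp (fun _ : ι => 𝕜) p) (μ : ι → 𝕜) : Prop :=
  ∀ i, T (lp.single p i 1) = μ i • lp.single p i 1

variable {T : lp (fun _ : ι => 𝕜) p →L[𝕜] lp (fun _ : ι => 𝕜) p} {μ : ι → 𝕜}

theorem IsDiagonal.apply (hp : p ≠ ⊤) (hT : IsDiagonal T μ) (f : lp (fun _ : ι => 𝕜) p)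
    (j : ι) : T f j = μ j * f j := by
  have hcomp : (lp.evalCLM 𝕜 _ p j).comp T = μ j • lp.evalCLM 𝕜 _ p j := by
    refine lp.ext_continuousLinearMap hp fun i => ?_
    ext
    simp only [ContinuousLinearMap.comp_apply, lp.singleContinuousLinearMap_apply,
      smul_apply]
    rw [← mul_one (1 : 𝕜), ← smul_eq_mul, lp.single_smul, map_smul, hT i]
    by_cases hij : j = i
    · subst hij; simp [lp.evalCLM]
    · simp [lp.evalCLM, hij]
  exact congr($hcomp f)

theorem IsDiagonal.pow (hT : IsDiagonal T μ) (n : ℕ) : IsDiagonal (T ^ n) (μ ^ n) := by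
  induction n with
  | zero => intro i; simp
  | succ n ih =>
    intro i
    rw [pow_succ', mul_apply_eq_comp, ih i, map_smul, hT i, smul_smul, Pi.pow_apply,
      Pi.pow_apply, pow_succ]

theorem IsDiagonal.tendsto_inv_pow_smul_pow_apply (hp : p ≠ ⊤) (hT : IsDiagonal T μ) {r : ℝ}
    (hr0 : 0 ≤ r) (hr1 : r < 1) {v : lp (fun _ : ι => 𝕜) p} {j : ι} (hμj : μ j ≠ 0)
    (hv : ∀ i ≠ j, v i ≠ 0 → ‖μ i‖ ≤ r * ‖μ j‖) :
    Tendsto (fun n => (μ j ^ n)⁻¹ • (T ^ n) v) atTop (𝓝 (lp.single p j (v j))) := by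
  have hp0 : p ≠ 0 := (zero_lt_one.trans_le Fact.out).ne'
  have hcoord (n : ℕ) (i : ι) :
      ‖((μ j ^ n)⁻¹ • (T ^ n) v - lp.single p j (v j) : lp (fun _ : ι => 𝕜) p) i‖ ≤
        r ^ n * ‖v i‖ := by
    simp only [lp.coeFn_sub, lp.coeFn_smul, Pi.sub_apply, Pi.smul_apply, smul_eq_mul,
      (hT.pow n).apply hp, Pi.pow_apply, lp.single_apply]
    by_cases hij : i = j
    · subst hij
      simp only [Pi.single_eq_same, inv_mul_cancel_left₀ (pow_ne_zero n hμj), sub_self,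
        _root_.norm_zero]
      positivity
    rw [Pi.single_eq_of_ne hij, sub_zero, ← mul_assoc, norm_mul]
    by_cases hvi : v i = 0
    · simp [hvi]
    gcongr
    rw [norm_mul, norm_inv, norm_pow, norm_pow, inv_mul_le_iff₀ (by positivity), ← mul_pow,
      mul_comm]
    exact pow_le_pow_left₀ (norm_nonneg _) (hv i hij hvi) n
  have hnorm (n : ℕ) : ‖(μ j ^ n)⁻¹ • (T ^ n) v - lp.single p j (v j)‖ ≤ r ^ n * ‖v‖ :=
    calc _ ≤ ‖((r ^ n : ℝ) : 𝕜) • v‖ := lp.norm_mono hp0 fun i => by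
          simpa [norm_smul, abs_of_nonneg hr0] using hcoord n i
      _ = r ^ n * ‖v‖ := by rw [norm_smul, RCLike.norm_ofReal, abs_of_nonneg (by positivity)]
  rw [tendsto_iff_norm_sub_tendsto_zero]
  refine squeeze_zero (fun n => norm_nonneg _) hnorm ?_
  simpa using (tendsto_pow_atTop_nhds_zero_of_lt_one hr0 hr1).mul_const ‖v‖

theorem eq_top_of_isClosed_of_single_mem (hp : p ≠ ⊤) {V : Submodule 𝕜 (lp (fun _ : ι => 𝕜) p)}
    (hV : IsClosed (V : Set (lp (fun _ : ι => 𝕜) p))) (h : ∀ i, lp.single p i 1 ∈ V) :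
    V = ⊤ := by
  refine V.eq_top_iff'.2 fun f => hV.mem_of_tendsto (lp.hasSum_single hp f) (.of_forall ?_)
  intro s
  refine V.sum_mem fun i _ => ?_
  simpa [← lp.single_smul] using V.smul_mem (f i) (h i)

end lp

theorem smul_eN_eq_single (j : ℕ) (x : ℂ) : x • eN j = lp.single 2 j x := by
  rw [eN, ← lp.single_smul, smul_eq_mul, mul_one]

section

variable {q : ℝ} (hq0 : 0 < q) (hq1 : q < 1)
include hq0 hq1

theorem ofReal_sqrt_one_sub_pow_ne_zero {n : ℕ} (hn : n ≠ 0) :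
    ((√(1 - q ^ n) : ℝ) : ℂ) ≠ 0 := by
  have : q ^ n < 1 := pow_lt_one₀ hq0.le hq1 hn
  exact_mod_cast (Real.sqrt_pos.2 (by linarith)).ne'

theorem eN_mem_of_isClosed_of_leading_coeff {c : L2N →L[ℂ] L2N}
    (hc : ∀ j : ℕ, c (eN j) = ((q ^ j : ℝ) : ℂ) • eN j) {V : Submodule ℂ L2N}
    (hV : IsClosed (V : Set L2N)) (hcV : ∀ v ∈ V, c v ∈ V) {v : L2N} (hv : v ∈ V) {j : ℕ}
    (hvj : v j ≠ 0) (hlt : ∀ i < j, v i = 0) : eN j ∈ V := by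
  have hμj : ((q ^ j : ℝ) : ℂ) ≠ 0 := by exact_mod_cast (pow_pos hq0 j).ne'
  have hgap : ∀ i ≠ j, v i ≠ 0 → ‖((q ^ i : ℝ) : ℂ)‖ ≤ q * ‖((q ^ j : ℝ) : ℂ)‖ := by
    intro i hij hvi
    have hji : j + 1 ≤ i := lt_of_le_of_ne (not_lt.1 (mt (hlt i) hvi)) (Ne.symm hij)
    simp only [Complex.norm_real, Real.norm_eq_abs, abs_of_pos (pow_pos hq0 _), ← pow_succ']
    exact pow_le_pow_of_le_one hq0.le hq1.le hji
  have hdiag : lp.IsDiagonal c fun j => ((q ^ j : ℝ) : ℂ) := hc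
  have hlim := hdiag.tendsto_inv_pow_smul_pow_apply ENNReal.ofNat_ne_top hq0.le hq1 hμj hgap
  have hmem (n : ℕ) : (((q ^ j : ℝ) : ℂ) ^ n)⁻¹ • (c ^ n) v ∈ V := by
    refine V.smul_mem _ ?_
    simpa [Module.End.pow_apply] using
      Module.End.pow_apply_mem_of_forall_mem (f' := (c : L2N →ₗ[ℂ] L2N)) n hcV v hv
  have hsingle : lp.single 2 j (v j) ∈ V := hV.mem_of_tendsto hlim (.of_forall hmem)
  rwa [← smul_eN_eq_single, V.smul_mem_iff hvj] at hsingle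

end

theorem stmt_3_general (q : ℝ) (hq0 : 0 < q) (hq1 : q < 1)
    (a b c d : L2N →L[ℂ] L2N)
    (ha : ∀ j : ℕ, 1 ≤ j →
      a (eN j) = ((Real.sqrt (1 - q ^ (2 * j)) : ℝ) : ℂ) • eN (j - 1))
    (hc : ∀ j : ℕ, c (eN j) = ((q ^ j : ℝ) : ℂ) • eN j)
    (hd : ∀ j : ℕ, d (eN j) = ((Real.sqrt (1 - q ^ (2 * (j + 1))) : ℝ) : ℂ) • eN (j + 1)) :
    ∀ V : Submodule ℂ L2N, IsClosed (V : Set L2N) →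
      (∀ v ∈ V, a v ∈ V) → (∀ v ∈ V, b v ∈ V) →
      (∀ v ∈ V, c v ∈ V) → (∀ v ∈ V, d v ∈ V) →
      V = ⊥ ∨ V = ⊤ := by
  intro V hV haV _ hcV hdV
  refine or_iff_not_imp_left.2 fun hV0 => ?_
  obtain ⟨v, hvV, hv0⟩ := V.ne_bot_iff.1 hV0
  have hex : ∃ j, v j ≠ 0 := by
    by_contra! h
    exact hv0 (lp.ext (funext h))
  have hfirst : eN (Nat.find hex) ∈ V :=
    eN_mem_of_isClosed_of_leading_coeff hq0 hq1 hc hV hcV hvV (Nat.find_spec hex)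
      fun i hi => not_not.1 (Nat.find_min hex hi)
  have hstep (k : ℕ) : eN (k + 1) ∈ V ↔ eN k ∈ V := by
    have hcoeff := ofReal_sqrt_one_sub_pow_ne_zero hq0 hq1 (n := 2 * (k + 1)) (by omega)
    refine ⟨fun hk => ?_, fun hk => ?_⟩
    · have h := haV _ hk
      rwa [ha (k + 1) (by omega), Nat.add_sub_cancel, V.smul_mem_iff hcoeff] at h
    · have h := hdV _ hk
      rwa [hd k, V.smul_mem_iff hcoeff] at h
  have hall (k : ℕ) : eN k ∈ V ↔ eN 0 ∈ V := by
    induction k with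
    | zero => rfl
    | succ k ih => exact (hstep k).trans ih
  exact lp.eq_top_of_isClosed_of_single_mem ENNReal.ofNat_ne_top hV fun k =>
    (hall k).2 ((hall _).1 hfirst)

theorem stmt_3 (q : ℝ) (hq0 : 0 < q) (hq1 : q < 1)
    (a b c d : L2N →L[ℂ] L2N)
    (ha0 : a (eN 0) = 0)
    (ha : ∀ j : ℕ, 1 ≤ j →
      a (eN j) = ((Real.sqrt (1 - q ^ (2 * j)) : ℝ) : ℂ) • eN (j - 1))
    (hb : ∀ j : ℕ, b (eN j) = ((-(q ^ (j + 1)) : ℝ) : ℂ) • eN j)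
    (hc : ∀ j : ℕ, c (eN j) = ((q ^ j : ℝ) : ℂ) • eN j)
    (hd : ∀ j : ℕ, d (eN j) = ((Real.sqrt (1 - q ^ (2 * (j + 1))) : ℝ) : ℂ) • eN (j + 1)) :
    ∀ V : Submodule ℂ L2N, IsClosed (V : Set L2N) →
      (∀ v ∈ V, a v ∈ V) → (∀ v ∈ V, b v ∈ V) →
      (∀ v ∈ V, c v ∈ V) → (∀ v ∈ V, d v ∈ V) →
      V = ⊥ ∨ V = ⊤ :=
  stmt_3_general q hq0 hq1 a b c d ha hc hd
end

section
/- Let H be a complex Hilbert space, let L be a nonzero positive (self-adjoint, nonnegative) bounded operator on H, let T be a bounded operator on H, and let μ > 1 be a real number such that L∘T = μ·(T∘L). Then T annihilates every eigenvector of L with eigenvalue equal to the operator norm ‖L‖: if L v = ‖L‖·v then T v = 0. -/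
theorem stmt_8 {H : Type*} [NormedAddCommGroup H] [InnerProductSpace ℂ H]
    [CompleteSpace H]
    (L : H →L[ℂ] H) (hL0 : L ≠ 0) (hLpos : L.IsPositive)
    (T : H →L[ℂ] H) (μ : ℝ) (hμ : 1 < μ)
    (hcomm : L ∘L T = (μ : ℂ) • (T ∘L L))
    (v : H) (hv : L v = ((‖L‖ : ℝ) : ℂ) • v) :
    T v = 0 := by
  by_contra hw
  have hLnorm : (0 : ℝ) < ‖L‖ := norm_pos_iff.mpr hL0
  -- L (T v) = μ‖L‖ • T v
  have key : L (T v) = ((μ * ‖L‖ : ℝ) : ℂ) • T v := by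
    have h1 : L (T v) = (μ : ℂ) • T (L v) := by
      have := congrFun (congrArg DFunLike.coe hcomm) v
      simpa using this
    rw [h1, hv, map_smul, smul_smul]
    push_cast
    ring_nf
  -- norm computation
  have h2 : ‖L (T v)‖ = (μ * ‖L‖) * ‖T v‖ := by
    rw [key, norm_smul, Complex.norm_real, Real.norm_eq_abs,
      abs_of_pos (mul_pos (lt_trans one_pos hμ) hLnorm)]
  have h3 : ‖L (T v)‖ ≤ ‖L‖ * ‖T v‖ := L.le_opNorm _
  rw [h2] at h3
  have hTv : (0 : ℝ) < ‖T v‖ := norm_pos_iff.mpr hw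
  nlinarith [mul_pos hLnorm hTv]
end
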